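/- Contrapositive of the congruence lemma: if L ⊆ Σ^ω is not ω-regular, then for every function f : Σ* → F into a finite set F there exists a sequence of finite words u_1, u_2, … such that exactly one of the two ω-words u_1 u_2 ⋯ and f-representative substitution f(u_1)-class representatives u_1' u_2' ⋯ (with f(u_i) = f(u_i')) is in L; concretely, there exist sequences (u_i), (u_i') with f(u_i) = f(u_i') for all i and u_1 u_2 ⋯ ∈ L but u_1' u_2' ⋯ ∉ L. -/

import Mathlib

open Filter

variable {A : Type*}

/-- The interval coded by `p` occupies positions `p.1, …, p.1 + p.2 - 1` (length `p.2 > 0`). -/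
def IntervalLt (p q : ℕ × ℕ) : Prop := p.1 + p.2 ≤ q.1

def IntervalDisj (p q : ℕ × ℕ) : Prop := p.1 + p.2 ≤ q.1 ∨ q.1 + q.2 ≤ p.1

def prefixList (u : ℕ → List A) (m : ℕ) : List A := (List.range m).flatMap u

/-- Prepending a finite word to an ω-word. -/
def prepend (w : List A) (x : ℕ → A) : ℕ → A := fun n =>
  if h : n < w.length then w.get ⟨n, h⟩ else x (n - w.length)

open Classical in
/-- The infinite concatenation `u 0 · u 1 · u 2 ⋯` of a sequence of finite words, as an
ω-word; meaningful when infinitely many of the `u i` are nonempty. -/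
noncomputable def omegaConcat [Inhabited A] (u : ℕ → List A) : ℕ → A := fun n =>
  if h : ∃ m, n < (prefixList u m).length
  then (prefixList u (Nat.find h)).getD n default
  else default

/-- The ω-power `v^ω` of a finite word; meaningful when `v ≠ []`. -/
noncomputable def omegaPow [Inhabited A] (v : List A) : ℕ → A := fun n =>
  v.getD (n % v.length) default

/-- Infinitely many of the words `u i` are nonempty. -/
def InfOftenNonempty (u : ℕ → List A) : Prop := ∀ n, ∃ m, n ≤ m ∧ u m ≠ []

/-- A relation on finite words has finite index (finitely many classes). -/
def FiniteIndex (r : List A → List A → Prop) : Prop :=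
  (Set.range fun w => {v | r w v}).Finite

/-- Compatibility with concatenation. -/
def ConcatCongr (r : List A → List A → Prop) : Prop :=
  ∀ u₁ u₁' u₂ u₂' : List A, r u₁ u₁' → r u₂ u₂' → r (u₁ ++ u₂) (u₁' ++ u₂')

/-- The relation `r` recognizes `L`: relating the blocks of two infinite concatenations
pointwise preserves membership in `L`. -/
def Recognizes [Inhabited A] (r : List A → List A → Prop) (L : Set (ℕ → A)) : Prop :=
  ∀ u u' : ℕ → List A, InfOftenNonempty u → InfOftenNonempty u' →
    (∀ i, r (u i) (u' i)) → (omegaConcat u ∈ L ↔ omegaConcat u' ∈ L)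

/-- Nondeterministic Büchi automaton. -/
structure BuchiAutomaton (A : Type*) where
  Q : Type
  finQ : Finite Q
  init : Set Q
  step : Q → A → Set Q
  acc : Set Q

def BuchiAutomaton.Accepts (M : BuchiAutomaton A) (x : ℕ → A) : Prop :=
  ∃ ρ : ℕ → M.Q, ρ 0 ∈ M.init ∧ (∀ n, ρ (n + 1) ∈ M.step (ρ n) (x n)) ∧
    ∀ n, ∃ m, n ≤ m ∧ ρ m ∈ M.acc

def OmegaRegular (L : Set (ℕ → A)) : Prop :=
  ∃ M : BuchiAutomaton A, ∀ x, x ∈ L ↔ M.Accepts x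

/-- ω-words over `{a, b}` (with `a = true`, `b = false`) of the form `a^{k₁} b a^{k₂} b ⋯`
whose blocks of `a`'s have unbounded size. -/
def Uset : Set (ℕ → Bool) :=
  {x | (∀ n, ∃ m, n ≤ m ∧ x m = false) ∧ ∀ n, ∃ k, ∀ i < n, x (k + i) = true}

/-!
Let `≈` be the congruence on words generated by identifying nonempty words with equal
`f`-values; it has at most `|F| + 1` classes. If the kernel of `f` recognizes `L`, so does `≈`:
replacing a nonempty factor `x` of the prefix `U` or of the period `v` of a lasso `U v^ω` by some
`x'` with `f x = f x'` is an instance of recognizability (cut the lasso as `…, w, x, z, …`), and by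
Ramsey's theorem every factorisation into nonempty blocks coarsens to one whose blocks after the
first share their `f`-value, so that it can be exchanged for a lasso. Applying Ramsey's theorem
to the letters of `x ∈ L` then shows that `L` is the union of the `s · t^ω` over the pairs of
`≈`-classes `(s, t)` with some `U v^ω ∈ L`, `U ∈ s`, `v ∈ t`; a Büchi automaton that runs the
finite quotient monoid on each block recognizes this union.
-/

theorem prefixList_succ (u : ℕ → List A) (m : ℕ) :
    prefixList u (m + 1) = prefixList u m ++ u m := by
  simp [prefixList, List.range_succ]

def segmentList (u : ℕ → List A) (i j : ℕ) : List A := (List.range' i (j - i)).flatMap u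

def regroup (u : ℕ → List A) (g : ℕ → ℕ) (i : ℕ) : List A := segmentList u (g i) (g (i + 1))

def letters (x : ℕ → A) (n : ℕ) : List A := [x n]

def lasso (U v : List A) (n : ℕ) : List A := if n = 0 then U else v

/-- The sequence `p₀, p₁, p₂, q₀, q₁, q₂, q₀, q₁, q₂, …`. -/
def lasso3 (p q : List (List A)) (n : ℕ) : List A := (if n < 3 then p else q).getD (n % 3) []

section Words

variable {u : ℕ → List A} {i j k : ℕ}

theorem prefixList_eq_segmentList (u : ℕ → List A) (m : ℕ) :
    prefixList u m = segmentList u 0 m := by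
  simp [prefixList, segmentList, List.range_eq_range']

theorem segmentList_append (hij : i ≤ j) (hjk : j ≤ k) :
    segmentList u i j ++ segmentList u j k = segmentList u i k := by
  have h := List.range'_append (s := i) (m := j - i) (n := k - j) (step := 1)
  rw [show i + 1 * (j - i) = j by omega, show j - i + (k - j) = k - i by omega] at h
  rw [segmentList, segmentList, segmentList, ← List.flatMap_append, h]

theorem segmentList_succ (h : i ≤ j) : segmentList u i (j + 1) = segmentList u i j ++ u j := by
  rw [← segmentList_append h (Nat.le_succ j)]
  simp [segmentList]

theorem segmentList_ne_nil (hij : i < j) (hu : u i ≠ []) : segmentList u i j ≠ [] := by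
  simp only [segmentList, ne_eq, List.flatMap_eq_nil_iff, List.mem_range'_1, not_forall]
  exact ⟨i, ⟨le_rfl, by omega⟩, hu⟩

theorem exists_ne_nil_of_segmentList_ne_nil (h : segmentList u i j ≠ []) :
    ∃ k, i ≤ k ∧ k < j ∧ u k ≠ [] := by
  contrapose! h
  simp only [segmentList, List.flatMap_eq_nil_iff, List.mem_range'_1]
  exact fun k hk => h k hk.1 (by omega)

theorem prefixList_isPrefix {m m' : ℕ} (h : m ≤ m') : prefixList u m <+: prefixList u m' := by
  rw [prefixList_eq_segmentList, prefixList_eq_segmentList,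
    ← segmentList_append (Nat.zero_le m) h]
  exact List.prefix_append _ _

theorem prefixList_regroup (u : ℕ → List A) {g : ℕ → ℕ} (hg : Monotone g) (m : ℕ) :
    prefixList (regroup u g) m = segmentList u (g 0) (g m) := by
  induction m with
  | zero => simp [prefixList, segmentList]
  | succ m ih =>
    rw [prefixList_succ, ih, regroup, segmentList_append (hg (Nat.zero_le m)) (hg m.le_succ)]

theorem regroup_letters_ne_nil (x : ℕ → A) {b : ℕ → ℕ} (hb : StrictMono b) (i : ℕ) :
    regroup (letters x) b i ≠ [] :=
  segmentList_ne_nil (hb (Nat.lt_add_one i)) (List.cons_ne_nil _ _)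

theorem regroup_lasso3 {p q : List (List A)} (hp : p.length = 3) (hq : q.length = 3) :
    regroup (lasso3 p q) (3 * ·) = lasso p.flatten q.flatten := by
  match p, q, hp, hq with
  | [a, b, c], [d, e, g], _, _ =>
    funext i
    rcases i with _ | i
    · simp [regroup, segmentList, lasso3, lasso, List.range'_succ]
    · simp [regroup, segmentList, lasso3, lasso, List.range'_succ, Nat.mul_add, Nat.add_mod,
        show ¬ 3 * i + 3 + 1 < 3 by omega, show ¬ 3 * i + 3 + 1 + 1 < 3 by omega]

theorem InfOftenNonempty.exists_lt_length (hu : InfOftenNonempty u) (n : ℕ) :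
    ∃ m, n < (prefixList u m).length := by
  induction n with
  | zero =>
    obtain ⟨m, -, hm⟩ := hu 0
    exact ⟨m + 1, by simp [prefixList_succ, List.length_pos_iff.2 hm]⟩
  | succ n ih =>
    obtain ⟨m, hm⟩ := ih
    obtain ⟨k, hk, hk'⟩ := hu m
    refine ⟨k + 1, ?_⟩
    have := (prefixList_isPrefix (u := u) hk).length_le
    have := List.length_pos_iff.2 hk'
    simp only [prefixList_succ, List.length_append]
    omega

theorem InfOftenNonempty.of_regroup {g : ℕ → ℕ} (hg : StrictMono g)
    (hu : InfOftenNonempty (regroup u g)) : InfOftenNonempty u := by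
  intro n
  obtain ⟨m, hnm, hm⟩ := hu n
  obtain ⟨k, hk, -, hk'⟩ := exists_ne_nil_of_segmentList_ne_nil hm
  exact ⟨k, hnm.trans (hg.le_apply.trans hk), hk'⟩

theorem infOftenNonempty_lasso (U : List A) {v : List A} (hv : v ≠ []) :
    InfOftenNonempty (lasso U v) :=
  fun n => ⟨n + 1, n.le_succ, by simpa [lasso] using hv⟩

theorem infOftenNonempty_lasso3 {p q : List (List A)} (hp : p.length = 3) (hq : q.length = 3)
    (hne : q.flatten ≠ []) : InfOftenNonempty (lasso3 p q) :=
  InfOftenNonempty.of_regroup (g := (3 * ·)) (fun _ _ h => by simp only; omega)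
    (by rw [regroup_lasso3 hp hq]; exact infOftenNonempty_lasso _ hne)

end Words

section OmegaConcat

variable [Inhabited A]

theorem omegaConcat_apply {u : ℕ → List A} {n m : ℕ} (h : n < (prefixList u m).length) :
    omegaConcat u n = (prefixList u m).getD n default := by
  have hex : ∃ m, n < (prefixList u m).length := ⟨m, h⟩
  rw [omegaConcat, dif_pos hex]
  rcases le_total (Nat.find hex) m with hle | hle
  · obtain ⟨r, hr⟩ := prefixList_isPrefix (u := u) hle
    rw [← hr, List.getD_append _ _ _ _ (Nat.find_spec hex)]
  · obtain ⟨r, hr⟩ := prefixList_isPrefix (u := u) hle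
    rw [← hr, List.getD_append _ _ _ _ h]

theorem omegaConcat_eq_of_isPrefix {u u' : ℕ → List A} (hu : InfOftenNonempty u)
    (h : ∀ m, ∃ m', prefixList u m <+: prefixList u' m') :
    omegaConcat u = omegaConcat u' := by
  funext n
  obtain ⟨m, hm⟩ := hu.exists_lt_length n
  obtain ⟨m', r, hr⟩ := h m
  have hm' : n < (prefixList u' m').length := by rw [← hr, List.length_append]; omega
  rw [omegaConcat_apply hm, omegaConcat_apply hm', ← hr, List.getD_append _ _ _ _ hm]

theorem omegaConcat_regroup {u : ℕ → List A} {g : ℕ → ℕ} (hg : Monotone g) (h0 : g 0 = 0)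
    (hu : InfOftenNonempty (regroup u g)) : omegaConcat (regroup u g) = omegaConcat u :=
  omegaConcat_eq_of_isPrefix hu fun m =>
    ⟨g m, by rw [prefixList_regroup u hg, h0, prefixList_eq_segmentList]⟩

theorem omegaConcat_letters (x : ℕ → A) : omegaConcat (letters x) = x := by
  have hlet : ∀ m, prefixList (letters x) m = (List.range m).map x := fun m =>
    List.flatMap_pure_eq_map x _
  funext n
  rw [omegaConcat_apply (m := n + 1) (by simp [hlet]), hlet]
  simp

theorem omegaConcat_lasso3 {p q : List (List A)} (hp : p.length = 3) (hq : q.length = 3)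
    (hne : q.flatten ≠ []) :
    omegaConcat (lasso3 p q) = omegaConcat (lasso p.flatten q.flatten) := by
  rw [← regroup_lasso3 hp hq, omegaConcat_regroup (fun _ _ h => Nat.mul_le_mul_left 3 h) rfl]
  rw [regroup_lasso3 hp hq]
  exact infOftenNonempty_lasso _ hne

end OmegaConcat

theorem exists_strictMono_consecutive_eq {F : Type*} [Finite F] (c : ℕ → ℕ → F) :
    ∃ g : ℕ → ℕ, StrictMono g ∧ ∀ i, c (g i) (g (i + 1)) = c (g 0) (g 1) := by
  classical
  have : Fintype F := Fintype.ofFinite F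
  suffices key : ∀ S : Finset F, ∀ c : ℕ → ℕ → F, (∀ i j, i < j → c i j ∈ S) →
      ∃ g : ℕ → ℕ, StrictMono g ∧ ∃ e, ∀ i, c (g i) (g (i + 1)) = e by
    obtain ⟨g, hg, e, he⟩ := key Finset.univ c fun _ _ _ => Finset.mem_univ _
    exact ⟨g, hg, fun i => (he i).trans (he 0).symm⟩
  intro S
  induction S using Finset.induction_on with
  | empty => exact fun c hc => absurd (hc 0 1 one_pos) (Finset.notMem_empty _)
  | insert e S _ ih =>
    intro c hc
    obtain ⟨g, hcons | havoid⟩ := exists_increasing_or_nonincreasing_subseq' (c · · = e) id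
    · exact ⟨g, g.strictMono, e, hcons⟩
    · obtain ⟨g', hg', e', he'⟩ := ih (fun i j => c (g i) (g j)) fun i j hij =>
        (Finset.mem_insert.1 (hc _ _ (g.strictMono hij))).resolve_left (havoid i j hij)
      exact ⟨g ∘ g', g.strictMono.comp hg', e', he'⟩

theorem exists_cuts_consecutive_eq {F : Type*} [Finite F] (c : ℕ → ℕ → F) :
    ∃ g : ℕ → ℕ, StrictMono g ∧ g 0 = 0 ∧ ∀ i, c (g (i + 1)) (g (i + 2)) = c (g 1) (g 2) := by
  obtain ⟨h, hh, hc⟩ := exists_strictMono_consecutive_eq fun i j => c (i + 1) (j + 1)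
  refine ⟨fun | 0 => 0 | i + 1 => h i + 1, strictMono_nat_of_lt_succ fun i => ?_, rfl, hc⟩
  cases i
  · exact Nat.succ_pos _
  · exact Nat.succ_lt_succ (hh (Nat.lt_add_one _))

theorem notMem_range_of_lt_of_lt {b : ℕ → ℕ} (hb : StrictMono b) {i k : ℕ} (h₁ : b i < k)
    (h₂ : k < b (i + 1)) : k ∉ Set.range b := by
  rintro ⟨m, rfl⟩
  have := hb.lt_iff_lt.1 h₁
  have := hb.lt_iff_lt.1 h₂
  omega

theorem exists_cuts_of_infinite {p : ℕ → Prop} (hinf : (Set.ofPred p).Infinite) (hp0 : ¬ p 0) :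
    ∃ b : ℕ → ℕ, StrictMono b ∧ b 0 = 0 ∧ (∀ i, p (b (i + 1))) ∧
      ∀ i k, b i < k → k < b (i + 1) → ¬ p k := by
  classical
  obtain ⟨b, hb0, hbs⟩ : ∃ b : ℕ → ℕ, b 0 = 0 ∧ ∀ i, b (i + 1) = Nat.nth p i :=
    ⟨fun | 0 => 0 | i + 1 => Nat.nth p i, rfl, fun _ => rfl⟩
  have hb : StrictMono b := strictMono_nat_of_lt_succ fun i => by
    cases i with
    | zero =>
      rw [hb0, hbs]
      exact Nat.pos_of_ne_zero fun h => hp0 (h ▸ Nat.nth_mem_of_infinite hinf 0)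
    | succ i => rw [hbs, hbs]; exact Nat.nth_strictMono hinf (Nat.lt_add_one i)
  refine ⟨b, hb, hb0, fun i => hbs i ▸ Nat.nth_mem_of_infinite hinf i, fun i k h₁ h₂ hk => ?_⟩
  exact notMem_range_of_lt_of_lt hb h₁ h₂ ⟨_, (hbs _).trans (Nat.nth_count hk)⟩

def BuchiAccepts {Q : Type*} (init : Set Q) (step : Q → A → Set Q) (acc : Set Q)
    (x : ℕ → A) : Prop :=
  ∃ ρ : ℕ → Q, ρ 0 ∈ init ∧ (∀ n, ρ (n + 1) ∈ step (ρ n) (x n)) ∧ ∀ n, ∃ m, n ≤ m ∧ ρ m ∈ acc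

/-- `BuchiAutomaton.Q` lives in `Type`, so the states are transported to some `Fin n`. -/
theorem omegaRegular_of_buchiAccepts {Q : Type*} [Finite Q] (init : Set Q)
    (step : Q → A → Set Q) (acc : Set Q) {L : Set (ℕ → A)}
    (hL : ∀ x, x ∈ L ↔ BuchiAccepts init step acc x) : OmegaRegular L := by
  obtain ⟨n, ⟨e⟩⟩ := Finite.exists_equiv_fin Q
  refine ⟨⟨Fin n, inferInstance, e.symm ⁻¹' init, fun q a => e.symm ⁻¹' step (e.symm q) a,
    e.symm ⁻¹' acc⟩, fun x => (hL x).trans ⟨?_, ?_⟩⟩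
  · rintro ⟨ρ, h0, hs, ha⟩
    exact ⟨e ∘ ρ, by simpa using h0, fun n => by simpa using hs n, by simpa using ha⟩
  · rintro ⟨ρ, h0, hs, ha⟩
    exact ⟨e.symm ∘ ρ, h0, hs, ha⟩

section LassoAutomaton

variable {M : Type*} [Monoid M] {φ : FreeMonoid A →* M} {P : Set (M × M)}

variable (φ P) in
/-- `⋃_{(s, t) ∈ P} φ⁻¹(s) · φ⁻¹(t)^ω`, all blocks nonempty. -/
def lassoLanguage : Set (ℕ → A) :=
  {x | ∃ b : ℕ → ℕ, StrictMono b ∧ b 0 = 0 ∧ ∃ t,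
    (φ (.ofList (regroup (letters x) b 0)), t) ∈ P ∧
    ∀ i, φ (.ofList (regroup (letters x) b (i + 1))) = t}

variable (P) in
def BlockEnds : Option M → M → M → Prop
  | none, m, t => (m, t) ∈ P
  | some t', m, t => m = t' ∧ t = t'

variable (φ P) in
/-- In a state `(m, o, e)`, `m` is the value of the part of the current block read so far, `o` is
`none` while reading the first block and `some t` once all later blocks must have value `t`, and
`e` records that a block has just ended. -/
def lassoStep (q : M × Option M × Bool) (a : A) : Set (M × Option M × Bool) :=
  {(q.1 * φ (.of a), q.2.1, false)} ∪
    {q' | ∃ t, q' = (1, some t, true) ∧ BlockEnds P q.2.1 (q.1 * φ (.of a)) t}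

theorem eq_continue_of_mem_lassoStep {q q' : M × Option M × Bool} {a : A}
    (hs : q' ∈ lassoStep φ P q a) (hq' : q'.2.2 = false) : q' = (q.1 * φ (.of a), q.2.1, false) := by
  rcases hs with h | ⟨t, h, -⟩
  · exact h
  · simp [h] at hq'

theorem exists_blockEnds_of_mem_lassoStep {q q' : M × Option M × Bool} {a : A}
    (hs : q' ∈ lassoStep φ P q a) (hq' : q'.2.2 = true) :
    ∃ t, q' = (1, some t, true) ∧ BlockEnds P q.2.1 (q.1 * φ (.of a)) t := by
  rcases hs with h | h
  · simp [Set.mem_singleton_iff.1 h] at hq'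
  · exact h

theorem lassoRun_block {ρ : ℕ → M × Option M × Bool} {x : ℕ → A} {b : ℕ → ℕ} {i n : ℕ}
    (hn : b (i + 1) = n + 1) (hbi : b i ≤ n) (h1 : (ρ (b i)).1 = 1)
    (hcont : ∀ k, b i ≤ k → k < n → ρ (k + 1) = ((ρ k).1 * φ (.of (x k)), (ρ k).2.1, false)) :
    (ρ n).1 * φ (.of (x n)) = φ (.ofList (regroup (letters x) b i)) ∧
      (ρ n).2.1 = (ρ (b i)).2.1 := by
  have evolve : ∀ m, b i ≤ m → m ≤ n →
      (ρ m).1 = φ (.ofList (segmentList (letters x) (b i) m)) ∧ (ρ m).2.1 = (ρ (b i)).2.1 := by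
    intro m hm
    induction m, hm using Nat.le_induction with
    | base => simp [segmentList, h1]
    | succ m hm ih =>
      intro hmn
      obtain ⟨ih1, ih2⟩ := ih (by omega)
      rw [hcont m hm (by omega)]
      simp [ih1, ih2, segmentList_succ hm, letters]
  obtain ⟨e1, e2⟩ := evolve n hbi le_rfl
  refine ⟨?_, e2⟩
  rw [e1, regroup, hn, segmentList_succ hbi]
  simp [letters]

theorem mem_lassoLanguage_of_buchiAccepts {x : ℕ → A}
    (h : BuchiAccepts {(1, none, false)} (lassoStep φ P) {q | q.2.2 = true} x) :
    x ∈ lassoLanguage φ P := by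
  obtain ⟨ρ, h0, hs, hacc⟩ := h
  rw [Set.mem_singleton_iff] at h0
  have hinf : (Set.ofPred fun n => (ρ n).2.2 = true).Infinite :=
    Set.infinite_of_forall_exists_gt fun a => by
      obtain ⟨m, hm, hm'⟩ := hacc (a + 1)
      exact ⟨m, hm', by omega⟩
  obtain ⟨b, hb, hb0, hend, hgap⟩ := exists_cuts_of_infinite hinf (by simp [h0])
  have hblock : ∀ i, (ρ (b i)).1 = 1 → ∃ t, ρ (b (i + 1)) = (1, some t, true) ∧
      BlockEnds P (ρ (b i)).2.1 (φ (.ofList (regroup (letters x) b i))) t := by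
    intro i h1
    obtain ⟨n, hn⟩ := Nat.exists_eq_add_one.2 (Nat.zero_lt_of_lt (hb (Nat.lt_add_one i)))
    have hbi : b i ≤ n := by have := hb (Nat.lt_add_one i); omega
    obtain ⟨e1, e2⟩ := lassoRun_block hn hbi h1 fun k hk hkn =>
      eq_continue_of_mem_lassoStep (hs k) (by simpa using hgap i (k + 1) (by omega) (by omega))
    obtain ⟨t, ht, hend⟩ := exists_blockEnds_of_mem_lassoStep (hs n) (hn ▸ hend i)
    exact ⟨t, hn ▸ ht, e1 ▸ e2 ▸ hend⟩
  obtain ⟨t, ht, hP⟩ := hblock 0 (by simp [hb0, h0])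
  have hloop : ∀ i, ρ (b (i + 1)) = (1, some t, true) := by
    intro i
    induction i with
    | zero => exact ht
    | succ i ih =>
      obtain ⟨t', ht', hend⟩ := hblock (i + 1) (by rw [ih])
      rw [ih] at hend
      obtain ⟨-, rfl⟩ : _ ∧ t' = t := hend
      exact ht'
  refine ⟨b, hb, hb0, t, by simpa [hb0, h0, BlockEnds] using hP, fun i => ?_⟩
  obtain ⟨_, -, hend⟩ := hblock (i + 1) (by rw [hloop i])
  rw [hloop i] at hend
  exact (show _ ∧ _ from hend).1

theorem buchiAccepts_of_mem_lassoLanguage {x : ℕ → A} (hx : x ∈ lassoLanguage φ P) :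
    BuchiAccepts {(1, none, false)} (lassoStep φ P) {q | q.2.2 = true} x := by
  classical
  obtain ⟨b, hb, hb0, t, hP, ht⟩ := hx
  obtain ⟨ρ, h0, hρ⟩ : ∃ ρ : ℕ → M × Option M × Bool, ρ 0 = (1, none, false) ∧ ∀ n,
      ρ (n + 1) = if n + 1 ∈ Set.range b then (1, some t, true)
        else ((ρ n).1 * φ (.of (x n)), (ρ n).2.1, false) :=
    ⟨fun n => Nat.rec (1, none, false) (fun n q => if n + 1 ∈ Set.range b then (1, some t, true)
      else (q.1 * φ (.of (x n)), q.2.1, false)) n, rfl, fun _ => rfl⟩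
  have hbound : ∀ i, ρ (b (i + 1)) = (1, some t, true) := fun i => by
    obtain ⟨n, hn⟩ := Nat.exists_eq_add_one.2 (Nat.zero_lt_of_lt (hb (Nat.lt_add_one i)))
    rw [hn, hρ, if_pos (hn ▸ Set.mem_range_self _)]
  refine ⟨ρ, h0, fun n => ?_, fun n => ⟨b (n + 1), ?_, ?_⟩⟩
  · by_cases hn : n + 1 ∈ Set.range b
    · obtain ⟨j, hj⟩ := hn
      obtain ⟨i, rfl⟩ : ∃ i, j = i + 1 :=
        Nat.exists_eq_succ_of_ne_zero (by rintro rfl; omega)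
      have hbi : b i ≤ n := by have := hb (Nat.lt_add_one i); omega
      have h1 : (ρ (b i)).1 = 1 := by
        cases i with
        | zero => simp [hb0, h0]
        | succ i => simp [hbound]
      obtain ⟨e1, e2⟩ := lassoRun_block hj hbi h1 fun k hk hkn => by
        rw [hρ, if_neg (notMem_range_of_lt_of_lt hb (i := i) (k := k + 1) (by omega) (by omega))]
      refine Or.inr ⟨t, by rw [hρ, if_pos ⟨_, hj⟩], ?_⟩
      rw [e1, e2]
      cases i with
      | zero => simpa [hb0, h0, BlockEnds] using hP
      | succ i => rw [hbound]; exact ⟨ht i, rfl⟩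
    · exact Or.inl (by rw [hρ, if_neg hn]; rfl)
  · have := hb.le_apply (x := n + 1)
    omega
  · show (ρ (b (n + 1))).2.2 = true
    rw [hbound]

theorem omegaRegular_lassoLanguage [Finite M] (φ : FreeMonoid A →* M) (P : Set (M × M)) :
    OmegaRegular (lassoLanguage φ P) :=
  omegaRegular_of_buchiAccepts _ (lassoStep φ P) {q | q.2.2 = true} fun _ =>
    ⟨buchiAccepts_of_mem_lassoLanguage, mem_lassoLanguage_of_buchiAccepts⟩

end LassoAutomaton

section WordCon

variable {F : Type*} {f : List A → F}

variable (f) in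
def wordCon : Con (FreeMonoid A) :=
  conGen fun x y => x ≠ 1 ∧ y ≠ 1 ∧ f x.toList = f y.toList

theorem wordCon_ofList {w w' : List A} (hw : w ≠ []) (hw' : w' ≠ []) (h : f w = f w') :
    wordCon f (.ofList w) (.ofList w') :=
  ConGen.Rel.of _ _ ⟨hw, hw', h⟩

theorem wordCon.eq_one_iff {x y : FreeMonoid A} (h : wordCon f x y) : x = 1 ↔ y = 1 := by
  induction h with
  | of x y h => exact iff_of_false h.1 h.2.1
  | refl => rfl
  | symm _ ih => exact ih.symm
  | trans _ _ ih₁ ih₂ => exact ih₁.trans ih₂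
  | mul _ _ ih₁ ih₂ => rw [mul_eq_one', mul_eq_one', ih₁, ih₂]

theorem wordCon_segmentList {u u' : ℕ → List A}
    (h : ∀ k, wordCon f (.ofList (u k)) (.ofList (u' k))) (i j : ℕ) :
    wordCon f (.ofList (segmentList u i j)) (.ofList (segmentList u' i j)) := by
  simp only [segmentList, List.flatMap_def, FreeMonoid.ofList_flatten, List.map_map]
  exact (wordCon f).list_prod fun k _ => h k

theorem finite_quotient_wordCon [Finite F] : Finite (wordCon f).Quotient := by
  classical
  let rep : Option F → (wordCon f).Quotient
    | none => 1
    | some y => if h : ∃ w : List A, w ≠ [] ∧ f w = y then (wordCon f).mk' (.ofList h.choose) else 1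
  refine Finite.of_surjective rep fun q => Con.induction_on q fun x => ?_
  by_cases hx : x = 1
  · exact ⟨none, by simp [rep, hx]⟩
  · have hex : ∃ w : List A, w ≠ [] ∧ f w = f x.toList := ⟨x.toList, hx, rfl⟩
    refine ⟨some (f x.toList), ?_⟩
    simp only [rep, dif_pos hex]
    exact (wordCon f).eq.2 (wordCon_ofList hex.choose_spec.1 hx hex.choose_spec.2)

end WordCon

section Saturation

variable [Inhabited A] {F : Type*} {f : List A → F} {L : Set (ℕ → A)}

theorem Recognizes.lasso_flatten_mem_iff (H : Recognizes (fun w w' => f w = f w') L)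
    {p q p' q' : List (List A)} (hp : p.length = 3) (hq : q.length = 3) (hp' : p'.length = 3)
    (hq' : q'.length = 3) (hne : q.flatten ≠ []) (hne' : q'.flatten ≠ [])
    (hpp : ∀ k, f (p.getD k []) = f (p'.getD k []))
    (hqq : ∀ k, f (q.getD k []) = f (q'.getD k [])) :
    omegaConcat (lasso p.flatten q.flatten) ∈ L ↔
      omegaConcat (lasso p'.flatten q'.flatten) ∈ L := by
  rw [← omegaConcat_lasso3 hp hq hne, ← omegaConcat_lasso3 hp' hq' hne']
  refine H _ _ (infOftenNonempty_lasso3 hp hq hne) (infOftenNonempty_lasso3 hp' hq' hne')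
    fun n => ?_
  simp only [lasso3]
  split_ifs
  exacts [hpp _, hqq _]

theorem Recognizes.mem_iff_lasso (H : Recognizes (fun w w' => f w = f w') L) {u : ℕ → List A}
    (hu : ∀ i, u (i + 1) ≠ []) (hf : ∀ i, f (u (i + 1)) = f (u 1)) :
    omegaConcat u ∈ L ↔ omegaConcat (lasso (u 0) (u 1)) ∈ L :=
  H _ _ (fun n => ⟨n + 1, n.le_succ, hu n⟩) (infOftenNonempty_lasso _ (hu 0)) fun
    | 0 => rfl
    | i + 1 => hf i

variable (L) in
def LassoEquiv (U U' : List A) : Prop :=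
  (∀ v, v ≠ [] → (omegaConcat (lasso U v) ∈ L ↔ omegaConcat (lasso U' v) ∈ L)) ∧
    ∀ P, U ≠ [] → (omegaConcat (lasso P U) ∈ L ↔ omegaConcat (lasso P U') ∈ L)

theorem LassoEquiv.symm {U U' : List A} (h : LassoEquiv L U U') (hnil : U = [] ↔ U' = []) :
    LassoEquiv L U' U :=
  ⟨fun v hv => (h.1 v hv).symm, fun P hU' => (h.2 P (hnil.not.2 hU')).symm⟩

theorem LassoEquiv.trans {U U' U'' : List A} (h : LassoEquiv L U U') (h' : LassoEquiv L U' U'')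
    (hnil : U = [] ↔ U' = []) : LassoEquiv L U U'' :=
  ⟨fun v hv => (h.1 v hv).trans (h'.1 v hv),
    fun P hU => (h.2 P hU).trans (h'.2 P (hnil.not.1 hU))⟩

theorem Recognizes.lassoEquiv_append {x x' : List A} (H : Recognizes (fun w w' => f w = f w') L)
    (hx : x ≠ []) (hx' : x' ≠ []) (hf : f x = f x') (w z : List A) :
    LassoEquiv L (w ++ x ++ z) (w ++ x' ++ z) := by
  have hxx : ∀ k, f ([w, x, z].getD k []) = f ([w, x', z].getD k []) := by
    rintro (_ | _ | _ | k) <;> simp [hf]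
  refine ⟨fun v hv => ?_, fun P _ => ?_⟩
  · simpa using H.lasso_flatten_mem_iff (p := [w, x, z]) (q := [v, [], []]) (p' := [w, x', z])
      (q' := [v, [], []]) rfl rfl rfl rfl (by simpa) (by simpa) hxx fun _ => rfl
  · simpa using H.lasso_flatten_mem_iff (p := [P, [], []]) (q := [w, x, z]) (p' := [P, [], []])
      (q' := [w, x', z]) rfl rfl rfl rfl (by simp [hx]) (by simp [hx']) (fun _ => rfl) hxx

theorem Recognizes.lassoEquiv_of_wordCon (H : Recognizes (fun w w' => f w = f w') L)
    {x y : FreeMonoid A} (h : wordCon f x y) (w z : FreeMonoid A) :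
    LassoEquiv L (w * x * z).toList (w * y * z).toList := by
  have hnil : ∀ {x y : FreeMonoid A}, wordCon f x y → ∀ w z : FreeMonoid A,
      (w * x * z).toList = [] ↔ (w * y * z).toList = [] := fun h w z =>
    wordCon.eq_one_iff ((wordCon f).mul ((wordCon f).mul ((wordCon f).refl w) h) ((wordCon f).refl z))
  induction h generalizing w z with
  | of x y h =>
    simpa using H.lassoEquiv_append (x := x.toList) (x' := y.toList) h.1 h.2.1 h.2.2 w.toList z.toList
  | refl => exact ⟨fun _ _ => Iff.rfl, fun _ _ => Iff.rfl⟩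
  | symm h ih => exact (ih w z).symm (hnil h w z)
  | trans h _ ih₁ ih₂ => exact (ih₁ w z).trans (ih₂ w z) (hnil h w z)
  | @mul a a' b b' h₁ _ ih₁ ih₂ =>
    have ih₂' := ih₂ (w * a') z
    rw [show w * a' * b * z = w * a' * (b * z) by simp only [mul_assoc]] at ih₂'
    simpa only [mul_assoc] using (ih₁ w (b * z)).trans ih₂' (hnil h₁ w _)

theorem Recognizes.lasso_mem_iff_of_wordCon (H : Recognizes (fun w w' => f w = f w') L)
    {U U' v v' : List A} (hU : wordCon f (.ofList U) (.ofList U'))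
    (hv : wordCon f (.ofList v) (.ofList v')) (hv₀ : v ≠ []) :
    omegaConcat (lasso U v) ∈ L ↔ omegaConcat (lasso U' v') ∈ L := by
  have hU' := H.lassoEquiv_of_wordCon hU 1 1
  have hv' := H.lassoEquiv_of_wordCon hv 1 1
  simp only [one_mul, mul_one] at hU' hv'
  exact (hU'.1 v hv₀).trans (hv'.2 U' hv₀)

end Saturation

section Recognition

variable [Inhabited A] {F : Type*} [Finite F] {f : List A → F} {L : Set (ℕ → A)}

theorem Recognizes.mem_iff_of_wordCon (H : Recognizes (fun w w' => f w = f w') L)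
    {u u' : ℕ → List A} (hu : ∀ i, u (i + 1) ≠ [])
    (h : ∀ i, wordCon f (.ofList (u i)) (.ofList (u' i))) :
    omegaConcat u ∈ L ↔ omegaConcat u' ∈ L := by
  obtain ⟨g, hg, hg0, hc⟩ := exists_cuts_consecutive_eq fun i j =>
    (f (segmentList u i j), f (segmentList u' i j))
  have hGG : ∀ i, wordCon f (.ofList (regroup u g i)) (.ofList (regroup u' g i)) :=
    fun i => wordCon_segmentList h _ _
  have hG : ∀ i, regroup u g (i + 1) ≠ [] := fun i => by
    obtain ⟨k, hk⟩ := Nat.exists_eq_add_one.2 (Nat.zero_lt_of_lt (hg (Nat.lt_add_one i)))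
    exact segmentList_ne_nil (hg (Nat.lt_add_one _)) (hk ▸ hu k)
  have hG' : ∀ i, regroup u' g (i + 1) ≠ [] := fun i =>
    (wordCon.eq_one_iff (hGG (i + 1))).not.1 (hG i)
  rw [← omegaConcat_regroup hg.monotone hg0 fun n => ⟨n + 1, n.le_succ, hG n⟩,
    ← omegaConcat_regroup hg.monotone hg0 fun n => ⟨n + 1, n.le_succ, hG' n⟩,
    H.mem_iff_lasso hG fun i => congrArg Prod.fst (hc i),
    H.mem_iff_lasso hG' fun i => congrArg Prod.snd (hc i)]
  exact H.lasso_mem_iff_of_wordCon (hGG 0) (hGG 1) (hG 0)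

theorem Recognizes.eq_lassoLanguage (H : Recognizes (fun w w' => f w = f w') L) :
    L = lassoLanguage (wordCon f).mk' {p | ∃ U v, v ≠ [] ∧ (wordCon f).mk' (.ofList U) = p.1 ∧
      (wordCon f).mk' (.ofList v) = p.2 ∧ omegaConcat (lasso U v) ∈ L} := by
  ext x
  constructor
  · intro hx
    obtain ⟨b, hb, hb0, hc⟩ :=
      exists_cuts_consecutive_eq fun i j => f (segmentList (letters x) i j)
    have hne := regroup_letters_ne_nil x hb
    have hx' := omegaConcat_regroup hb.monotone hb0 fun n => ⟨n, le_rfl, hne n⟩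
    rw [omegaConcat_letters] at hx'
    refine ⟨b, hb, hb0, _, ⟨_, _, hne 1, rfl, rfl, ?_⟩, fun i =>
      (wordCon f).eq.2 (wordCon_ofList (hne _) (hne 1) (hc i))⟩
    exact (H.mem_iff_lasso (fun i => hne _) hc).1 (hx'.symm ▸ hx)
  · rintro ⟨b, hb, hb0, t, ⟨U, v, hv, hU, hvt, hL⟩, ht⟩
    have hx := omegaConcat_regroup hb.monotone hb0 fun n =>
      ⟨n, le_rfl, regroup_letters_ne_nil x hb n⟩
    rw [omegaConcat_letters] at hx
    rw [← hx, H.mem_iff_of_wordCon (fun i => regroup_letters_ne_nil x hb _) (u' := lasso U v)]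
    · exact hL
    · rintro (_ | i)
      · exact (wordCon f).eq.1 hU.symm
      · exact (wordCon f).eq.1 ((ht i).trans hvt.symm)

theorem Recognizes.omegaRegular (H : Recognizes (fun w w' => f w = f w') L) : OmegaRegular L := by
  have := finite_quotient_wordCon (f := f)
  rw [H.eq_lassoLanguage]
  exact omegaRegular_lassoLanguage _ _

end Recognition

/-- Contrapositive of the congruence lemma: if `L` is not ω-regular then the kernel of
any function into a finite set fails to recognize `L`, witnessed by two pointwise
kernel-equivalent sequences whose concatenations disagree on membership in `L`. -/
theorem statement13 [Inhabited A] {F : Type*} [Finite F] (L : Set (ℕ → A))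
    (hL : ¬ OmegaRegular L) (f : List A → F) :
    ∃ u u' : ℕ → List A, InfOftenNonempty u ∧ InfOftenNonempty u' ∧
      (∀ i, f (u i) = f (u' i)) ∧ omegaConcat u ∈ L ∧ omegaConcat u' ∉ L := by
  by_contra h
  push Not at h
  exact hL (Recognizes.omegaRegular (f := f) fun u u' hu hu' hf =>
    ⟨h u u' hu hu' hf, h u' u hu' hu fun i => (hf i).symm⟩)
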